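/- arXiv:1311.0154 — 2 statements merged into one kernel-verified Lean document; each statement's English description precedes it below -/
import Mathlib

section
/- Assume the maps x ↦ Φ(|x|), v ↦ G(v) and x ↦ F(|x|²)x are locally Lipschitz on ℝ^d. Let T, R > 0, let (f_t)_{t∈[0,T]} and (g_t)_{t∈[0,T]} be families of Borel probability measures on ℝ^d × ℝ^d supported in the ball B_R of ℝ^{2d}, and suppose that for every t ∈ [0,T] the map (x,v) ↦ H_[f_t](x,v) is Lipschitz on B_R with constant L_R (uniform in t). Let (X₁,V₁), (X₂,V₂) : [0,T] → ℝ^d × ℝ^d be differentiable curves with the same initial datum (x₀,v₀), remaining in B_R, and satisfying X₁'(t) = V₁(t), V₁'(t) = H_[f_t](X₁(t),V₁(t)) and X₂'(t) = V₂(t), V₂'(t) = H_[g_t](X₂(t),V₂(t)). Then, with C_R = 1 + L_R, for all t ∈ [0,T]: |(X₁(t),V₁(t)) − (X₂(t),V₂(t))| ≤ ((e^{C_R t} − 1)/C_R) · sup_{s∈[0,T]} sup_{(x,v)∈B_R} |H_[f_s](x,v) − H_[g_s](x,v)|. -/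
open MeasureTheory Filter
open scoped RealInnerProductSpace BigOperators ENNReal

noncomputable section

abbrev Euc (d : ℕ) := EuclideanSpace ℝ (Fin d)

abbrev Phase (d : ℕ) := Euc d × Euc d

/-- Euclidean norm on the phase space ℝ^d × ℝ^d ≅ ℝ^{2d}. -/
noncomputable def pnorm {d : ℕ} (z : Phase d) : ℝ :=
  Real.sqrt (‖z.1‖ ^ 2 + ‖z.2‖ ^ 2)

/-- Closed ball of radius `R` (Euclidean norm) in the phase space ℝ^{2d}. -/
def pball (d : ℕ) (R : ℝ) : Set (Phase d) := {z | pnorm z ≤ R}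

/-- Velocity fluctuation 𝒢[f]. -/
noncomputable def velFluc {d : ℕ} (f : Measure (Phase d)) : ℝ :=
  (∫ z, ‖z.2‖ ^ 2 ∂f) - ‖∫ z, z.2 ∂f‖ ^ 2

/-- Position fluctuation Γ[f]. -/
noncomputable def posFluc {d : ℕ} (f : Measure (Phase d)) : ℝ :=
  (∫ z, ‖z.1‖ ^ 2 ∂f) - ‖∫ z, z.1 ∂f‖ ^ 2

/-- Interaction field H_[f]. -/
noncomputable def Hfield {d : ℕ} (Φ : ℝ → ℝ) (G : Euc d → Euc d) (F : ℝ → ℝ) (α : ℝ)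
    (f : Measure (Phase d)) (x v : Euc d) : Euc d :=
  - (∫ z, Φ ‖x - z.1‖ • G (v - z.2) ∂f)
    + velFluc f ^ ((2 * α - 1) / 2) • ∫ z, F (‖x - z.1‖ ^ 2) • (x - z.1) ∂f

/-- A family of compactly supported Borel probability measures is a weak solution of the
kinetic flocking equation on the time set `I` if for every `C¹` test function `φ` the map
`t ↦ ∫ φ d f_t` is differentiable (within `I`) with the stated derivative. -/
def IsWeakSolution {d : ℕ} (Φ : ℝ → ℝ) (G : Euc d → Euc d) (F : ℝ → ℝ) (α : ℝ)
    (I : Set ℝ) (f : ℝ → Measure (Phase d)) : Prop :=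
  (∀ t ∈ I, IsProbabilityMeasure (f t) ∧ ∃ K : Set (Phase d), IsCompact K ∧ f t Kᶜ = 0) ∧
  ∀ φ : Phase d → ℝ, ContDiff ℝ 1 φ → ∀ t ∈ I,
    HasDerivWithinAt (fun s => ∫ z, φ z ∂(f s))
      (∫ z, fderiv ℝ φ z (z.2, Hfield Φ G F α (f t) z.1 z.2) ∂(f t)) I t

/-- Measure-valued solution of the kinetic flocking equation on a time set `I ∋ 0`,
given by a family of compactly supported probability measures together with a flow map `𝒯`. -/
def IsMVSolution {d : ℕ} (Φ : ℝ → ℝ) (G : Euc d → Euc d) (F : ℝ → ℝ) (α : ℝ)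
    (I : Set ℝ) (f₀ : Measure (Phase d)) (f : ℝ → Measure (Phase d))
    (T : ℝ → Phase d → Phase d) : Prop :=
  (0 : ℝ) ∈ I ∧
  ContinuousOn (fun p : ℝ × Phase d => T p.1 p.2) (I ×ˢ Set.univ) ∧
  T 0 = id ∧
  (∀ t ∈ I, IsProbabilityMeasure (f t) ∧ ∃ K : Set (Phase d), IsCompact K ∧ f t Kᶜ = 0) ∧
  (∀ z₀ : Phase d, ∀ t ∈ I,
    HasDerivWithinAt (fun s => T s z₀)
      ((T t z₀).2, Hfield Φ G F α (f t) (T t z₀).1 (T t z₀).2) I t) ∧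
  (∀ t ∈ I, f t = f₀.map (T t))

/-- `π` is a coupling of `f` and `g`. -/
def IsCoupling {d : ℕ} (π : Measure (Phase d × Phase d)) (f g : Measure (Phase d)) : Prop :=
  π.map Prod.fst = f ∧ π.map Prod.snd = g

/-- The Monge–Kantorovich–Rubinstein distance W₁ (with the Euclidean cost on ℝ^{2d}). -/
noncomputable def W1 {d : ℕ} (f g : Measure (Phase d)) : ℝ :=
  sInf {c : ℝ | ∃ π : Measure (Phase d × Phase d), IsProbabilityMeasure π ∧ IsCoupling π f g ∧
    Integrable (fun p => pnorm (p.1 - p.2)) π ∧ c = ∫ p, pnorm (p.1 - p.2) ∂π}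

end

/-! The difference `Z₁ - Z₂` of the two characteristics satisfies
`‖(Z₁ - Z₂)'‖ ≤ (1 + L) ‖Z₁ - Z₂‖ + M`: the position component of the derivative is the velocity
difference, bounded by `‖Z₁ - Z₂‖`, and the acceleration difference splits, through `H[f_s]`
evaluated at `Z₂ s`, into a Lipschitz term `L ‖Z₁ - Z₂‖` and the field discrepancy `≤ M`.
Gronwall's inequality with zero initial difference then gives `(e^{(1+L)t} - 1)/(1+L) · M`. -/

open Set

theorem norm_sub_le_gronwall_of_hasDerivWithinAt {E : Type*} [NormedAddCommGroup E]
    [NormedSpace ℝ E] {z₁ z₂ z₁' z₂' : ℝ → E} {T K M : ℝ} (hK : K ≠ 0)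
    (hz₁ : ∀ t ∈ Icc 0 T, HasDerivWithinAt z₁ (z₁' t) (Icc 0 T) t)
    (hz₂ : ∀ t ∈ Icc 0 T, HasDerivWithinAt z₂ (z₂' t) (Icc 0 T) t)
    (hinit : z₁ 0 = z₂ 0)
    (hbound : ∀ t ∈ Ico 0 T, ‖z₁' t - z₂' t‖ ≤ K * ‖z₁ t - z₂ t‖ + M) :
    ∀ t ∈ Icc 0 T, ‖z₁ t - z₂ t‖ ≤ (Real.exp (K * t) - 1) / K * M := by
  have hderiv (t) (ht : t ∈ Icc 0 T) :
      HasDerivWithinAt (fun s => z₁ s - z₂ s) (z₁' t - z₂' t) (Icc 0 T) t :=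
    (hz₁ t ht).sub (hz₂ t ht)
  intro t ht
  have h := norm_le_gronwallBound_of_norm_deriv_right_le (δ := 0)
    (fun s hs => (hderiv s hs).continuousWithinAt)
    (fun s hs => (hderiv s (Ico_subset_Icc_self hs)).mono_of_mem_nhdsWithin
      (Icc_mem_nhdsGE_of_mem hs))
    (by simp [hinit]) hbound t ht
  rw [gronwallBound_of_K_ne_0 hK] at h
  simpa only [zero_mul, zero_add, sub_zero, div_mul_comm] using h

lemma pnorm_eq_norm_toLp {d : ℕ} (z : Phase d) : pnorm z = ‖WithLp.toLp 2 z‖ :=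
  (WithLp.prod_norm_eq_of_L2 _).symm

lemma norm_snd_le_pnorm {d : ℕ} (z : Phase d) : ‖z.2‖ ≤ pnorm z :=
  Real.le_sqrt_of_sq_le (by nlinarith [sq_nonneg ‖z.1‖])

lemma pnorm_le_norm_fst_add_norm_snd {d : ℕ} (z : Phase d) : pnorm z ≤ ‖z.1‖ + ‖z.2‖ :=
  Real.sqrt_le_iff.mpr ⟨by positivity, by nlinarith [norm_nonneg z.1, norm_nonneg z.2]⟩

lemma pnorm_kinetic_sub_le {d : ℕ} (z₁ z₂ : Phase d) (a₁ a₂ : Euc d) :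
    pnorm ((z₁.2, a₁) - (z₂.2, a₂)) ≤ pnorm (z₁ - z₂) + ‖a₁ - a₂‖ :=
  (pnorm_le_norm_fst_add_norm_snd _).trans (add_le_add_left (norm_snd_le_pnorm (z₁ - z₂)) _)

theorem pnorm_sub_le_gronwall_of_hasDerivWithinAt {d : ℕ} {Z₁ Z₂ Z₁' Z₂' : ℝ → Phase d}
    {T K M : ℝ} (hK : K ≠ 0)
    (hZ₁ : ∀ t ∈ Icc 0 T, HasDerivWithinAt Z₁ (Z₁' t) (Icc 0 T) t)
    (hZ₂ : ∀ t ∈ Icc 0 T, HasDerivWithinAt Z₂ (Z₂' t) (Icc 0 T) t)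
    (hinit : Z₁ 0 = Z₂ 0)
    (hbound : ∀ t ∈ Ico 0 T, pnorm (Z₁' t - Z₂' t) ≤ K * pnorm (Z₁ t - Z₂ t) + M) :
    ∀ t ∈ Icc 0 T, pnorm (Z₁ t - Z₂ t) ≤ (Real.exp (K * t) - 1) / K * M := by
  let e := (WithLp.prodContinuousLinearEquiv 2 ℝ (Euc d) (Euc d)).symm
  have he (z : Phase d) : pnorm z = ‖e z‖ := pnorm_eq_norm_toLp z
  -- not found by instance search within the heartbeat budget
  have : ContinuousSMul ℝ (WithLp 2 (Phase d)) := IsBoundedSMul.continuousSMul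
  have hlift {Z Z' : ℝ → Phase d}
      (hZ : ∀ t ∈ Icc 0 T, HasDerivWithinAt Z (Z' t) (Icc 0 T) t) (t : ℝ) (ht : t ∈ Icc 0 T) :
      HasDerivWithinAt (fun s => e (Z s)) (e (Z' t)) (Icc 0 T) t :=
    e.hasFDerivAt.comp_hasDerivWithinAt t (hZ t ht)
  intro t ht
  have h := norm_sub_le_gronwall_of_hasDerivWithinAt hK (hlift hZ₁) (hlift hZ₂)
    (congrArg e hinit) (fun s hs => by rw [← map_sub, ← map_sub, ← he, ← he]; exact hbound s hs)
    t ht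
  rwa [← map_sub, ← he] at h

theorem stmt1_general {d : ℕ} (Φ F : ℝ → ℝ) (G : Euc d → Euc d) (α : ℝ)
    (T R : ℝ)
    (f g : ℝ → Measure (Phase d))
    (L : ℝ) (hL : 0 ≤ L)
    (hLip : ∀ t ∈ Set.Icc (0 : ℝ) T, ∀ z₁ ∈ pball d R, ∀ z₂ ∈ pball d R,
      ‖Hfield Φ G F α (f t) z₁.1 z₁.2 - Hfield Φ G F α (f t) z₂.1 z₂.2‖ ≤ L * pnorm (z₁ - z₂))
    (Z₁ Z₂ : ℝ → Phase d)
    (hinit : Z₁ 0 = Z₂ 0)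
    (hZ₁mem : ∀ t ∈ Set.Icc (0 : ℝ) T, Z₁ t ∈ pball d R)
    (hZ₂mem : ∀ t ∈ Set.Icc (0 : ℝ) T, Z₂ t ∈ pball d R)
    (hZ₁ : ∀ t ∈ Set.Icc (0 : ℝ) T,
      HasDerivWithinAt Z₁ ((Z₁ t).2, Hfield Φ G F α (f t) (Z₁ t).1 (Z₁ t).2) (Set.Icc 0 T) t)
    (hZ₂ : ∀ t ∈ Set.Icc (0 : ℝ) T,
      HasDerivWithinAt Z₂ ((Z₂ t).2, Hfield Φ G F α (g t) (Z₂ t).1 (Z₂ t).2) (Set.Icc 0 T) t)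
    (M : ℝ)
    (hM : ∀ s ∈ Set.Icc (0 : ℝ) T, ∀ z ∈ pball d R,
      ‖Hfield Φ G F α (f s) z.1 z.2 - Hfield Φ G F α (g s) z.1 z.2‖ ≤ M) :
    ∀ t ∈ Set.Icc (0 : ℝ) T,
      pnorm (Z₁ t - Z₂ t) ≤ (Real.exp ((1 + L) * t) - 1) / (1 + L) * M := by
  refine pnorm_sub_le_gronwall_of_hasDerivWithinAt (by positivity) hZ₁ hZ₂ hinit fun s hs => ?_
  have hs' : s ∈ Icc 0 T := Ico_subset_Icc_self hs
  set H := Hfield Φ G F α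
  have hacc : ‖H (f s) (Z₁ s).1 (Z₁ s).2 - H (g s) (Z₂ s).1 (Z₂ s).2‖
      ≤ L * pnorm (Z₁ s - Z₂ s) + M :=
    calc _ = ‖(H (f s) (Z₁ s).1 (Z₁ s).2 - H (f s) (Z₂ s).1 (Z₂ s).2)
            + (H (f s) (Z₂ s).1 (Z₂ s).2 - H (g s) (Z₂ s).1 (Z₂ s).2)‖ := by
          rw [sub_add_sub_cancel]
      _ ≤ _ := (norm_add_le _ _).trans (add_le_add
          (hLip s hs' _ (hZ₁mem s hs') _ (hZ₂mem s hs')) (hM s hs' _ (hZ₂mem s hs')))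
  calc _ ≤ pnorm (Z₁ s - Z₂ s) + ‖H (f s) (Z₁ s).1 (Z₁ s).2 - H (g s) (Z₂ s).1 (Z₂ s).2‖ :=
        pnorm_kinetic_sub_le _ _ _ _
    _ ≤ (1 + L) * pnorm (Z₁ s - Z₂ s) + M := by linarith

/-- stability of characteristics driven by two interaction fields. -/
theorem stmt1 {d : ℕ} (hd : 1 ≤ d) (Φ F : ℝ → ℝ) (G : Euc d → Euc d) (α : ℝ)
    (hΦc : Continuous Φ) (hGc : Continuous G) (hFc : Continuous F)
    (hα : 1 ≤ α ∧ α < 3 / 2)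
    (hΦlip : LocallyLipschitz (fun x : Euc d => Φ ‖x‖))
    (hGlip : LocallyLipschitz G)
    (hFlip : LocallyLipschitz (fun x : Euc d => F (‖x‖ ^ 2) • x))
    (T R : ℝ) (hT : 0 < T) (hR : 0 < R)
    (f g : ℝ → Measure (Phase d))
    (hfprob : ∀ t ∈ Set.Icc (0 : ℝ) T, IsProbabilityMeasure (f t))
    (hgprob : ∀ t ∈ Set.Icc (0 : ℝ) T, IsProbabilityMeasure (g t))
    (hfsupp : ∀ t ∈ Set.Icc (0 : ℝ) T, f t (pball d R)ᶜ = 0)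
    (hgsupp : ∀ t ∈ Set.Icc (0 : ℝ) T, g t (pball d R)ᶜ = 0)
    (L : ℝ) (hL : 0 ≤ L)
    (hLip : ∀ t ∈ Set.Icc (0 : ℝ) T, ∀ z₁ ∈ pball d R, ∀ z₂ ∈ pball d R,
      ‖Hfield Φ G F α (f t) z₁.1 z₁.2 - Hfield Φ G F α (f t) z₂.1 z₂.2‖ ≤ L * pnorm (z₁ - z₂))
    (Z₁ Z₂ : ℝ → Phase d)
    (hinit : Z₁ 0 = Z₂ 0)
    (hZ₁mem : ∀ t ∈ Set.Icc (0 : ℝ) T, Z₁ t ∈ pball d R)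
    (hZ₂mem : ∀ t ∈ Set.Icc (0 : ℝ) T, Z₂ t ∈ pball d R)
    (hZ₁ : ∀ t ∈ Set.Icc (0 : ℝ) T,
      HasDerivWithinAt Z₁ ((Z₁ t).2, Hfield Φ G F α (f t) (Z₁ t).1 (Z₁ t).2) (Set.Icc 0 T) t)
    (hZ₂ : ∀ t ∈ Set.Icc (0 : ℝ) T,
      HasDerivWithinAt Z₂ ((Z₂ t).2, Hfield Φ G F α (g t) (Z₂ t).1 (Z₂ t).2) (Set.Icc 0 T) t)
    (M : ℝ)
    (hM : ∀ s ∈ Set.Icc (0 : ℝ) T, ∀ z ∈ pball d R,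
      ‖Hfield Φ G F α (f s) z.1 z.2 - Hfield Φ G F α (g s) z.1 z.2‖ ≤ M) :
    ∀ t ∈ Set.Icc (0 : ℝ) T,
      pnorm (Z₁ t - Z₂ t) ≤ (Real.exp ((1 + L) * t) - 1) / (1 + L) * M :=
  stmt1_general Φ F G α T R f g L hL hLip Z₁ Z₂ hinit hZ₁mem hZ₂mem hZ₁ hZ₂ M hM
end

section
/- Assume G(−v) = −G(v) and G(v)·v ≥ G*|v|^{2α} for all v ∈ ℝ^d with constants G* > 0 and α ∈ [1,3/2), Φ(|x|) ≥ Φ* > 0 and |F(|x|²)x| ≤ F* for all x ∈ ℝ^d, with F* < 2^{α−1/2} Φ* G*; set C* = 2^α Φ* G* − √2 F* > 0. Let (f_t)_{t∈[0,T)} be a weak solution of the kinetic flocking equation with compactly supported measures, and let 𝒱₀ = ∫ v f₀(dx,dv). Then for every t ∈ [0,T): 𝒢[f_t] = ∫ |v − 𝒱₀|² f_t(dx,dv), the map t ↦ 𝒢[f_t] is differentiable, and (d/dt) 𝒢[f_t] ≤ −C* 𝒢[f_t]^α. -/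
open MeasureTheory Filter
open scoped RealInnerProductSpace BigOperators ENNReal

/-!
Testing the weak formulation against `⟪u, v⟫` and against `‖v‖²` reduces everything to
averages of `⟪a v, H_[μ](x, v)⟫`. Since `H_[μ]` is the `μ`-average of a pair kernel that is odd
under exchanging the two particles, such an average is half the `μ ⊗ μ`-average of
`⟪a v - a w, kernel⟫`. For constant `a` this vanishes: momentum is conserved, which gives the
formula for `𝒢[f_t]`. For `a = id` the coercivity of `G`, the lower bound on `Φ` and the bound on
`F` control it by `∫∫ ‖v - w‖^{2α}` and `∫∫ ‖v - w‖`, which Jensen's inequality compares with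
powers of `∫∫ ‖v - w‖² = 2 𝒢`.
-/

section CompactlyConcentrated

variable {X Y E : Type*} [TopologicalSpace X] [MeasurableSpace X]

theorem Continuous.integrable_of_measure_compl_eq_zero [OpensMeasurableSpace X] [T2Space X]
    [NormedAddCommGroup E] {μ : Measure X} [IsFiniteMeasure μ]
    (hμ : ∃ K, IsCompact K ∧ μ Kᶜ = 0) {g : X → E} (hg : Continuous g) : Integrable g μ := by
  obtain ⟨K, hK, hμK⟩ := hμ
  rw [← Measure.restrict_eq_self_of_ae_mem (mem_ae_iff.2 hμK)]
  exact hg.continuousOn.integrableOn_compact hK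

theorem exists_isCompact_measure_prod_compl_eq_zero [TopologicalSpace Y] [MeasurableSpace Y]
    {μ : Measure X} {ν : Measure Y} [SFinite ν] (hμ : ∃ K, IsCompact K ∧ μ Kᶜ = 0)
    (hν : ∃ L, IsCompact L ∧ ν Lᶜ = 0) : ∃ M, IsCompact M ∧ μ.prod ν Mᶜ = 0 := by
  obtain ⟨K, hK, hμK⟩ := hμ
  obtain ⟨L, hL, hνL⟩ := hν
  refine ⟨K ×ˢ L, hK.prod hL, ?_⟩
  rw [Set.compl_prod_eq_union]
  exact measure_union_null (by simp [Measure.prod_prod, hμK]) (by simp [Measure.prod_prod, hνL])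

theorem integral_inner_integral_eq_integral_prod [SecondCountableTopology X]
    [OpensMeasurableSpace X] [T2Space X] [NormedAddCommGroup E] [InnerProductSpace ℝ E]
    [CompleteSpace E]
    {μ : Measure X} [IsFiniteMeasure μ] (hμ : ∃ K, IsCompact K ∧ μ Kᶜ = 0)
    {e : X → E} {k : X × X → E} (he : Continuous e) (hk : Continuous k) :
    ∫ x, ⟪e x, ∫ y, k (x, y) ∂μ⟫ ∂μ = ∫ p, ⟪e p.1, k p⟫ ∂(μ.prod μ) := by
  have hint : Integrable (fun p : X × X => ⟪e p.1, k p⟫) (μ.prod μ) :=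
    ((he.comp continuous_fst).inner hk).integrable_of_measure_compl_eq_zero
      (exists_isCompact_measure_prod_compl_eq_zero hμ hμ)
  rw [integral_prod _ hint]
  refine integral_congr_ae (.of_forall fun x => ?_)
  exact (integral_inner ((hk.comp (Continuous.prodMk_right x)).integrable_of_measure_compl_eq_zero
    hμ) _).symm

end CompactlyConcentrated

theorem two_mul_integral_inner_eq_integral_inner_sub_of_swap {X E : Type*} [MeasurableSpace X]
    [NormedAddCommGroup E] [InnerProductSpace ℝ E] {μ : Measure X} [SFinite μ]
    {a : X → E} {k : X × X → E} (hk : ∀ p, k p.swap = -k p)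
    (h₁ : Integrable (fun p => ⟪a p.1, k p⟫) (μ.prod μ))
    (h₂ : Integrable (fun p => ⟪a p.2, k p⟫) (μ.prod μ)) :
    2 * ∫ p, ⟪a p.1, k p⟫ ∂(μ.prod μ) = ∫ p, ⟪a p.1 - a p.2, k p⟫ ∂(μ.prod μ) := by
  have hswap : ∫ p, ⟪a p.2, k p⟫ ∂(μ.prod μ) = -∫ p, ⟪a p.1, k p⟫ ∂(μ.prod μ) := by
    rw [← integral_prod_swap (fun p => ⟪a p.2, k p⟫), ← integral_neg]
    simp only [Prod.snd_swap, hk, inner_neg_right]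
  simp only [inner_sub_left]
  rw [integral_sub h₁ h₂, hswap]
  ring

theorem rpow_integral_le_integral_rpow {X : Type*} [MeasurableSpace X] {μ : Measure X}
    [IsProbabilityMeasure μ] {g : X → ℝ} {p : ℝ} (hp : 1 ≤ p) (hg0 : ∀ x, 0 ≤ g x)
    (hg : Integrable g μ) (hgp : Integrable (fun x => g x ^ p) μ) :
    (∫ x, g x ∂μ) ^ p ≤ ∫ x, g x ^ p ∂μ :=
  (convexOn_rpow hp).map_integral_le (Real.continuous_rpow_const (by linarith)).continuousOn
    isClosed_Ici (.of_forall hg0) hg hgp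

theorem integral_le_sqrt_integral_sq {X : Type*} [MeasurableSpace X] {μ : Measure X}
    [IsProbabilityMeasure μ] {g : X → ℝ} (hg : Integrable g μ)
    (hg2 : Integrable (fun x => g x ^ 2) μ) : ∫ x, g x ∂μ ≤ √(∫ x, g x ^ 2 ∂μ) :=
  Real.le_sqrt_of_sq_le ((even_two.convexOn_pow).map_integral_le (continuous_pow 2).continuousOn
    isClosed_univ (.of_forall fun _ => Set.mem_univ _) hg hg2)

theorem rpow_mul_sqrt_two_mul {x : ℝ} (hx : 0 ≤ x) {α : ℝ} (hα : α ≠ 0) :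
    x ^ ((2 * α - 1) / 2) * √(2 * x) = √2 * x ^ α := by
  rw [Real.sqrt_mul zero_le_two, Real.sqrt_eq_rpow x, mul_left_comm, ← Real.rpow_add' hx]
  · ring_nf
  · ring_nf
    exact hα

section Velocity

variable {d : ℕ}

theorem integral_norm_snd_sub_sq {μ : Measure (Phase d)} [IsProbabilityMeasure μ]
    (h₁ : Integrable (fun z => z.2) μ) (h₂ : Integrable (fun z => ‖z.2‖ ^ 2) μ) (c : Euc d) :
    ∫ z, ‖z.2 - c‖ ^ 2 ∂μ = velFluc μ + ‖∫ z, z.2 ∂μ - c‖ ^ 2 := by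
  have h₃ : Integrable (fun z : Phase d => 2 * ⟪z.2, c⟫) μ :=
    (h₁.inner_const (𝕜 := ℝ) c).const_mul 2
  have h₄ : Integrable (fun z : Phase d => ‖z.2‖ ^ 2 - 2 * ⟪z.2, c⟫) μ := h₂.sub h₃
  have hmean : ∫ z, ⟪z.2, c⟫ ∂μ = ⟪∫ z, z.2 ∂μ, c⟫ := by
    simp_rw [real_inner_comm c]
    exact integral_inner h₁ c
  simp only [norm_sub_sq_real]
  rw [integral_add h₄ (integrable_const _), integral_sub h₂ h₃, integral_const_mul,
    hmean, integral_const, velFluc]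
  simp only [probReal_univ, one_smul]
  ring

theorem velFluc_eq_integral_norm_snd_sub_sq {μ : Measure (Phase d)} [IsProbabilityMeasure μ]
    (h₁ : Integrable (fun z => z.2) μ) (h₂ : Integrable (fun z => ‖z.2‖ ^ 2) μ) :
    velFluc μ = ∫ z, ‖z.2 - ∫ w, w.2 ∂μ‖ ^ 2 ∂μ := by
  simp [integral_norm_snd_sub_sq h₁ h₂]

theorem integral_prod_norm_snd_sub_sq {μ : Measure (Phase d)} [IsProbabilityMeasure μ]
    (hμ : ∃ K, IsCompact K ∧ μ Kᶜ = 0) :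
    ∫ p, ‖p.1.2 - p.2.2‖ ^ 2 ∂(μ.prod μ) = 2 * velFluc μ := by
  have h₁ : Integrable (fun z : Phase d => z.2) μ :=
    continuous_snd.integrable_of_measure_compl_eq_zero hμ
  have h₂ : Integrable (fun z : Phase d => ‖z.2‖ ^ 2) μ :=
    (continuous_snd.norm.pow 2).integrable_of_measure_compl_eq_zero hμ
  have h₃ : Integrable (fun z : Phase d => ‖z.2 - ∫ w, w.2 ∂μ‖ ^ 2) μ :=
    (by fun_prop : Continuous _).integrable_of_measure_compl_eq_zero hμ
  have hprod : Integrable (fun p : Phase d × Phase d => ‖p.1.2 - p.2.2‖ ^ 2) (μ.prod μ) :=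
    (by fun_prop : Continuous _).integrable_of_measure_compl_eq_zero
      (exists_isCompact_measure_prod_compl_eq_zero hμ hμ)
  have hslice : ∀ x : Phase d,
      ∫ y, ‖x.2 - y.2‖ ^ 2 ∂μ = velFluc μ + ‖x.2 - ∫ w, w.2 ∂μ‖ ^ 2 := fun x => by
    simp_rw [norm_sub_rev x.2]
    exact integral_norm_snd_sub_sq h₁ h₂ x.2
  rw [integral_prod _ hprod]
  simp_rw [hslice]
  rw [integral_add (integrable_const _) h₃, integral_const,
    ← velFluc_eq_integral_norm_snd_sub_sq h₁ h₂]
  simp only [probReal_univ, one_smul]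
  ring

theorem velFluc_nonneg {μ : Measure (Phase d)} [IsProbabilityMeasure μ]
    (hμ : ∃ K, IsCompact K ∧ μ Kᶜ = 0) : 0 ≤ velFluc μ := by
  have h : 0 ≤ ∫ p, ‖p.1.2 - p.2.2‖ ^ 2 ∂(μ.prod μ) := integral_nonneg fun _ => sq_nonneg _
  rw [integral_prod_norm_snd_sub_sq hμ] at h
  linarith

theorem two_mul_velFluc_rpow_le {μ : Measure (Phase d)} [IsProbabilityMeasure μ]
    (hμ : ∃ K, IsCompact K ∧ μ Kᶜ = 0) {α : ℝ} (hα : 1 ≤ α) :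
    (2 * velFluc μ) ^ α ≤ ∫ p, ‖p.1.2 - p.2.2‖ ^ (2 * α) ∂(μ.prod μ) := by
  have hint : ∀ g : Phase d × Phase d → ℝ, Continuous g → Integrable g (μ.prod μ) :=
    fun g hg => hg.integrable_of_measure_compl_eq_zero
      (exists_isCompact_measure_prod_compl_eq_zero hμ hμ)
  have hsq : ∀ p : Phase d × Phase d,
      ‖p.1.2 - p.2.2‖ ^ (2 * α) = (‖p.1.2 - p.2.2‖ ^ 2) ^ α := fun p => by
    rw [Real.rpow_mul (norm_nonneg _), Real.rpow_two]
  have hcont : Continuous fun p : Phase d × Phase d => (‖p.1.2 - p.2.2‖ ^ 2) ^ α :=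
    (by fun_prop : Continuous _).rpow_const fun _ => Or.inr (by linarith)
  rw [← integral_prod_norm_snd_sub_sq hμ]
  simp_rw [hsq]
  exact rpow_integral_le_integral_rpow hα (fun _ => sq_nonneg _) (hint _ (by fun_prop))
    (hint _ hcont)

theorem integral_norm_snd_sub_le_sqrt {μ : Measure (Phase d)} [IsProbabilityMeasure μ]
    (hμ : ∃ K, IsCompact K ∧ μ Kᶜ = 0) :
    ∫ p, ‖p.1.2 - p.2.2‖ ∂(μ.prod μ) ≤ √(2 * velFluc μ) := by
  have hμμ := exists_isCompact_measure_prod_compl_eq_zero hμ hμ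
  rw [← integral_prod_norm_snd_sub_sq hμ]
  exact integral_le_sqrt_integral_sq
    ((by fun_prop : Continuous _).integrable_of_measure_compl_eq_zero hμμ)
    ((by fun_prop : Continuous _).integrable_of_measure_compl_eq_zero hμμ)

end Velocity

section Interaction

variable {d : ℕ} {Φ F : ℝ → ℝ} {G : Euc d → Euc d} {α : ℝ}

noncomputable def interactionKernel (Φ : ℝ → ℝ) (G : Euc d → Euc d) (F : ℝ → ℝ) (α : ℝ)
    (μ : Measure (Phase d)) (p : Phase d × Phase d) : Euc d :=
  -(Φ ‖p.1.1 - p.2.1‖ • G (p.1.2 - p.2.2))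
    + velFluc μ ^ ((2 * α - 1) / 2) • F (‖p.1.1 - p.2.1‖ ^ 2) • (p.1.1 - p.2.1)

theorem continuous_interactionKernel (hΦc : Continuous Φ) (hGc : Continuous G)
    (hFc : Continuous F) (μ : Measure (Phase d)) :
    Continuous (interactionKernel Φ G F α μ) := by
  unfold interactionKernel
  fun_prop

theorem interactionKernel_swap (hGodd : ∀ v, G (-v) = -G v) (μ : Measure (Phase d))
    (p : Phase d × Phase d) :
    interactionKernel Φ G F α μ p.swap = -interactionKernel Φ G F α μ p := by
  simp only [interactionKernel, Prod.fst_swap, Prod.snd_swap]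
  rw [norm_sub_rev p.2.1, ← neg_sub p.1.2, ← neg_sub p.1.1 p.2.1, hGodd]
  simp only [smul_neg, neg_add]

theorem Hfield_eq_integral_interactionKernel (hΦc : Continuous Φ) (hGc : Continuous G)
    (hFc : Continuous F) {μ : Measure (Phase d)} [IsFiniteMeasure μ]
    (hμ : ∃ K, IsCompact K ∧ μ Kᶜ = 0) (z : Phase d) :
    Hfield Φ G F α μ z.1 z.2 = ∫ w, interactionKernel Φ G F α μ (z, w) ∂μ := by
  have hint : ∀ g : Phase d → Euc d, Continuous g → Integrable g μ :=
    fun g hg => hg.integrable_of_measure_compl_eq_zero hμ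
  simp only [interactionKernel]
  rw [integral_add, integral_neg, integral_smul]
  · rfl
  all_goals exact hint _ (by fun_prop)

theorem two_mul_integral_inner_Hfield (hΦc : Continuous Φ) (hGc : Continuous G)
    (hFc : Continuous F) (hGodd : ∀ v, G (-v) = -G v) {μ : Measure (Phase d)}
    [IsProbabilityMeasure μ] (hμ : ∃ K, IsCompact K ∧ μ Kᶜ = 0) {a : Euc d → Euc d}
    (ha : Continuous a) :
    2 * ∫ z, ⟪a z.2, Hfield Φ G F α μ z.1 z.2⟫ ∂μ
      = ∫ p, ⟪a p.1.2 - a p.2.2, interactionKernel Φ G F α μ p⟫ ∂(μ.prod μ) := by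
  have hK := continuous_interactionKernel (α := α) hΦc hGc hFc μ
  have hμμ := exists_isCompact_measure_prod_compl_eq_zero hμ hμ
  simp_rw [Hfield_eq_integral_interactionKernel hΦc hGc hFc hμ]
  rw [integral_inner_integral_eq_integral_prod (e := fun z : Phase d => a z.2) hμ (by fun_prop) hK]
  exact two_mul_integral_inner_eq_integral_inner_sub_of_swap (a := fun z => a z.2)
    (interactionKernel_swap hGodd μ)
    ((by fun_prop : Continuous _).integrable_of_measure_compl_eq_zero hμμ)
    ((by fun_prop : Continuous _).integrable_of_measure_compl_eq_zero hμμ)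

theorem inner_sub_interactionKernel_le {Gs Φs Fs : ℝ} (hGs : 0 ≤ Gs) (hΦs : 0 ≤ Φs)
    (hGcoer : ∀ v : Euc d, Gs * ‖v‖ ^ (2 * α) ≤ ⟪G v, v⟫) (hΦlow : ∀ x : Euc d, Φs ≤ Φ ‖x‖)
    (hFbd : ∀ x : Euc d, ‖F (‖x‖ ^ 2) • x‖ ≤ Fs) {μ : Measure (Phase d)} (hV : 0 ≤ velFluc μ)
    (p : Phase d × Phase d) :
    ⟪p.1.2 - p.2.2, interactionKernel Φ G F α μ p⟫
      ≤ -(Φs * Gs * ‖p.1.2 - p.2.2‖ ^ (2 * α))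
        + velFluc μ ^ ((2 * α - 1) / 2) * (Fs * ‖p.1.2 - p.2.2‖) := by
  rw [interactionKernel, inner_add_right, inner_neg_right, real_inner_smul_right,
    real_inner_smul_right, real_inner_comm (G _)]
  refine add_le_add (neg_le_neg ?_) (mul_le_mul_of_nonneg_left ?_ (Real.rpow_nonneg hV _))
  · rw [mul_assoc]
    exact mul_le_mul (hΦlow _) (hGcoer _) (by positivity) (hΦs.trans (hΦlow _))
  · calc _ ≤ ‖p.1.2 - p.2.2‖ * ‖F (‖p.1.1 - p.2.1‖ ^ 2) • (p.1.1 - p.2.1)‖ :=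
          real_inner_le_norm _ _
      _ ≤ ‖p.1.2 - p.2.2‖ * Fs := by gcongr; exact hFbd _
      _ = Fs * ‖p.1.2 - p.2.2‖ := mul_comm _ _

theorem two_mul_integral_inner_Hfield_le (hΦc : Continuous Φ) (hGc : Continuous G)
    (hFc : Continuous F) (hGodd : ∀ v, G (-v) = -G v) (hα : 1 ≤ α) {Gs Φs Fs : ℝ}
    (hGs : 0 ≤ Gs) (hΦs : 0 ≤ Φs) (hGcoer : ∀ v : Euc d, Gs * ‖v‖ ^ (2 * α) ≤ ⟪G v, v⟫)
    (hΦlow : ∀ x : Euc d, Φs ≤ Φ ‖x‖) (hFbd : ∀ x : Euc d, ‖F (‖x‖ ^ 2) • x‖ ≤ Fs)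
    {μ : Measure (Phase d)} [IsProbabilityMeasure μ] (hμ : ∃ K, IsCompact K ∧ μ Kᶜ = 0) :
    2 * ∫ z, ⟪z.2, Hfield Φ G F α μ z.1 z.2⟫ ∂μ
      ≤ -(2 ^ α * Φs * Gs - √2 * Fs) * velFluc μ ^ α := by
  set V := velFluc μ
  have hint : ∀ g : Phase d × Phase d → ℝ, Continuous g → Integrable g (μ.prod μ) :=
    fun g hg => hg.integrable_of_measure_compl_eq_zero
      (exists_isCompact_measure_prod_compl_eq_zero hμ hμ)
  have hV : 0 ≤ V := velFluc_nonneg hμ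
  have hFs : 0 ≤ Fs := by simpa using hFbd 0
  have hw : Continuous fun p : Phase d × Phase d => ‖p.1.2 - p.2.2‖ := by fun_prop
  have hw2α : Continuous fun p : Phase d × Phase d => ‖p.1.2 - p.2.2‖ ^ (2 * α) :=
    hw.rpow_const fun _ => Or.inr (by linarith)
  calc 2 * ∫ z, ⟪z.2, Hfield Φ G F α μ z.1 z.2⟫ ∂μ
      = ∫ p, ⟪p.1.2 - p.2.2, interactionKernel Φ G F α μ p⟫ ∂(μ.prod μ) :=
        two_mul_integral_inner_Hfield hΦc hGc hFc hGodd hμ continuous_id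
    _ ≤ ∫ p, (-(Φs * Gs * ‖p.1.2 - p.2.2‖ ^ (2 * α))
          + V ^ ((2 * α - 1) / 2) * (Fs * ‖p.1.2 - p.2.2‖)) ∂(μ.prod μ) :=
        integral_mono (hint _ ((continuous_snd.comp continuous_fst).sub
            (continuous_snd.comp continuous_snd) |>.inner
            (continuous_interactionKernel hΦc hGc hFc μ)))
          (hint _ (((hw2α.const_mul _).neg).add ((hw.const_mul _).const_mul _)))
          (inner_sub_interactionKernel_le hGs hΦs hGcoer hΦlow hFbd hV)
    _ = -(Φs * Gs * ∫ p, ‖p.1.2 - p.2.2‖ ^ (2 * α) ∂(μ.prod μ))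
          + V ^ ((2 * α - 1) / 2) * (Fs * ∫ p, ‖p.1.2 - p.2.2‖ ∂(μ.prod μ)) := by
        rw [integral_add, integral_neg, integral_const_mul, integral_const_mul, integral_const_mul]
        exacts [((hint _ hw2α).const_mul _).neg, ((hint _ hw).const_mul _).const_mul _]
    _ ≤ -(Φs * Gs * (2 * V) ^ α) + V ^ ((2 * α - 1) / 2) * (Fs * √(2 * V)) := by
        gcongr
        exacts [two_mul_velFluc_rpow_le hμ hα, integral_norm_snd_sub_le_sqrt hμ]
    _ = -(2 ^ α * Φs * Gs - √2 * Fs) * V ^ α := by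
        rw [Real.mul_rpow zero_le_two hV]
        linear_combination Fs * rpow_mul_sqrt_two_mul hV (by linarith : α ≠ 0)

end Interaction

namespace IsWeakSolution

variable {d : ℕ} {Φ F : ℝ → ℝ} {G : Euc d → Euc d} {α : ℝ} {f : ℝ → Measure (Phase d)}

theorem hasDerivWithinAt_integral_comp_snd {I : Set ℝ}
    (hsol : IsWeakSolution Φ G F α I f) {ψ : Euc d → ℝ} (hψ : ContDiff ℝ 1 ψ) {t : ℝ}
    (ht : t ∈ I) :
    HasDerivWithinAt (fun s => ∫ z, ψ z.2 ∂(f s))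
      (∫ z, fderiv ℝ ψ z.2 (Hfield Φ G F α (f t) z.1 z.2) ∂(f t)) I t := by
  refine (hsol.2 (ψ ∘ Prod.snd) (hψ.comp contDiff_snd) t ht).congr_deriv
    (integral_congr_ae (.of_forall fun z => ?_))
  dsimp only
  rw [fderiv_comp _ (hψ.differentiable one_ne_zero _) differentiableAt_snd, fderiv_snd]
  rfl

theorem integral_snd_eq (hΦc : Continuous Φ) (hGc : Continuous G) (hFc : Continuous F)
    (hGodd : ∀ v, G (-v) = -G v) {T : ℝ} (hsol : IsWeakSolution Φ G F α (Set.Ico 0 T) f)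
    {t : ℝ} (ht : t ∈ Set.Ico 0 T) : ∫ z, z.2 ∂(f t) = ∫ z, z.2 ∂(f 0) := by
  refine ext_inner_left ℝ fun u => ?_
  have hderiv : ∀ s ∈ Set.Ico 0 T,
      HasDerivWithinAt (fun s => ∫ z, ⟪u, z.2⟫ ∂(f s)) 0 (Set.Ico 0 T) s := by
    intro s hs
    obtain ⟨hprob, hμ⟩ := hsol.1 s hs
    have hzero := two_mul_integral_inner_Hfield hΦc hGc hFc hGodd hμ (α := α) (a := fun _ => u)
      continuous_const
    simp only [sub_self, inner_zero_left, integral_zero, mul_eq_zero, two_ne_zero,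
      false_or] at hzero
    refine (hsol.hasDerivWithinAt_integral_comp_snd (innerSL ℝ u).contDiff hs).congr_deriv ?_
    simp only [ContinuousLinearMap.fderiv]
    exact hzero
  have hmean : ∀ s ∈ Set.Ico 0 T, ∫ z, ⟪u, z.2⟫ ∂(f s) = ⟪u, ∫ z, z.2 ∂(f s)⟫ := by
    intro s hs
    obtain ⟨hprob, hμ⟩ := hsol.1 s hs
    exact integral_inner (continuous_snd.integrable_of_measure_compl_eq_zero hμ) u
  have h0 : (0 : ℝ) ∈ Set.Ico 0 T := ⟨le_rfl, ht.1.trans_lt ht.2⟩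
  have hconst := (convex_Ico 0 T).norm_image_sub_le_of_norm_hasDerivWithin_le hderiv
    (fun _ _ => norm_zero.le) h0 ht
  rw [← hmean t ht, ← hmean 0 h0, ← sub_eq_zero, ← norm_le_zero_iff]
  simpa using hconst

theorem hasDerivWithinAt_velFluc (hΦc : Continuous Φ) (hGc : Continuous G)
    (hFc : Continuous F) (hGodd : ∀ v, G (-v) = -G v) {T : ℝ}
    (hsol : IsWeakSolution Φ G F α (Set.Ico 0 T) f) {t : ℝ} (ht : t ∈ Set.Ico 0 T) :
    HasDerivWithinAt (fun s => velFluc (f s))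
      (2 * ∫ z, ⟪z.2, Hfield Φ G F α (f t) z.1 z.2⟫ ∂(f t)) (Set.Ico 0 T) t := by
  have h := (hsol.hasDerivWithinAt_integral_comp_snd (contDiff_norm_sq ℝ) ht).sub_const
    (‖∫ z, z.2 ∂(f 0)‖ ^ 2)
  simp only [fderiv_norm_sq_apply, FunLike.coe_smul, Pi.smul_apply,
    innerSL_apply_apply, nsmul_eq_mul, Nat.cast_ofNat, integral_const_mul] at h
  exact h.congr_of_mem (fun s hs => by rw [velFluc, hsol.integral_snd_eq hΦc hGc hFc hGodd hs]) ht

end IsWeakSolution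

theorem stmt6_general {d : ℕ} (Φ F : ℝ → ℝ) (G : Euc d → Euc d) (α : ℝ)
    (hΦc : Continuous Φ) (hGc : Continuous G) (hFc : Continuous F)
    (hα : 1 ≤ α ∧ α < 3 / 2)
    (Gs Φs Fs : ℝ) (hGs : 0 < Gs) (hΦs : 0 < Φs)
    (hGodd : ∀ v : Euc d, G (-v) = -G v)
    (hGcoer : ∀ v : Euc d, Gs * ‖v‖ ^ (2 * α) ≤ ⟪G v, v⟫)
    (hΦlow : ∀ x : Euc d, Φs ≤ Φ ‖x‖)
    (hFbd : ∀ x : Euc d, ‖F (‖x‖ ^ 2) • x‖ ≤ Fs)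
    (T : ℝ)
    (f : ℝ → Measure (Phase d))
    (hsol : IsWeakSolution Φ G F α (Set.Ico 0 T) f) :
    ∀ t ∈ Set.Ico (0 : ℝ) T,
      velFluc (f t) = (∫ z, ‖z.2 - ∫ w, w.2 ∂(f 0)‖ ^ 2 ∂(f t)) ∧
      ∃ D : ℝ, HasDerivWithinAt (fun s => velFluc (f s)) D (Set.Ico 0 T) t ∧
        D ≤ -((2 : ℝ) ^ α * Φs * Gs - Real.sqrt 2 * Fs) * velFluc (f t) ^ α := by
  intro t ht
  obtain ⟨hprob, hμ⟩ := hsol.1 t ht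
  refine ⟨?_, _, hsol.hasDerivWithinAt_velFluc hΦc hGc hFc hGodd ht,
    two_mul_integral_inner_Hfield_le hΦc hGc hFc hGodd hα.1 hGs.le hΦs.le hGcoer hΦlow hFbd hμ⟩
  rw [← hsol.integral_snd_eq hΦc hGc hFc hGodd ht]
  exact velFluc_eq_integral_norm_snd_sub_sq
    (continuous_snd.integrable_of_measure_compl_eq_zero hμ)
    ((continuous_snd.norm.pow 2).integrable_of_measure_compl_eq_zero hμ)

/-- differential inequality for the velocity fluctuation 𝒢[f_t]. -/
theorem stmt6 {d : ℕ} (hd : 1 ≤ d) (Φ F : ℝ → ℝ) (G : Euc d → Euc d) (α : ℝ)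
    (hΦc : Continuous Φ) (hGc : Continuous G) (hFc : Continuous F)
    (hα : 1 ≤ α ∧ α < 3 / 2)
    (Gs Φs Fs : ℝ) (hGs : 0 < Gs) (hΦs : 0 < Φs)
    (hGodd : ∀ v : Euc d, G (-v) = -G v)
    (hGcoer : ∀ v : Euc d, Gs * ‖v‖ ^ (2 * α) ≤ ⟪G v, v⟫)
    (hΦlow : ∀ x : Euc d, Φs ≤ Φ ‖x‖)
    (hFbd : ∀ x : Euc d, ‖F (‖x‖ ^ 2) • x‖ ≤ Fs)
    (hFs : Fs < (2 : ℝ) ^ (α - 1 / 2) * Φs * Gs)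
    (T : ℝ) (hT : 0 < T)
    (f : ℝ → Measure (Phase d))
    (hsol : IsWeakSolution Φ G F α (Set.Ico 0 T) f) :
    ∀ t ∈ Set.Ico (0 : ℝ) T,
      velFluc (f t) = (∫ z, ‖z.2 - ∫ w, w.2 ∂(f 0)‖ ^ 2 ∂(f t)) ∧
      ∃ D : ℝ, HasDerivWithinAt (fun s => velFluc (f s)) D (Set.Ico 0 T) t ∧
        D ≤ -((2 : ℝ) ^ α * Φs * Gs - Real.sqrt 2 * Fs) * velFluc (f t) ^ α :=
  stmt6_general Φ F G α hΦc hGc hFc hα Gs Φs Fs hGs hΦs hGodd hGcoer hΦlow hFbd T f hsol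
end
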